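/- (Positivity of the Yosida pairing.) For every λ > 0, every nondecreasing Lipschitz-continuous function g : ℝ → ℝ with g(0) = 0, and every u ∈ L²(D), one has ⟨A_λ u, g ∘ u⟩_{L²(D)} ≥ 0. (In the paper this is applied with g = β_λ, the Yosida approximation of a maximal monotone graph β ⊆ ℝ × ℝ with 0 ∈ β(0), which is such a function.) -/

import Mathlib

open RealInnerProductSpace MeasureTheory

/-! Let `G` be the primitive of `g` vanishing at `0`: it is convex and nonnegative, with supporting
lines `s ↦ G a + g a * (s - a)`. Hence `(u - v) * g u ≥ G u - G v` pointwise, and it suffices to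
show `∫ G (J_λ u) ≤ ∫ G u`. A sub-Markovian operator that is continuous on `L¹` is positive, and
since every supporting line of `G` has nonpositive intercept while `S_λ 1 ≤ 1`, this gives
Jensen's inequality `G (S_λ u) ≤ S_λ (G ∘ u)`; integrating and using that `S_λ` is an
`L¹`-contraction yields the claim. -/

noncomputable def primitive (g : ℝ → ℝ) (s : ℝ) : ℝ := ∫ t in (0 : ℝ)..s, g t

section Primitive

variable {g : ℝ → ℝ}

@[simp]
lemma primitive_zero : primitive g 0 = 0 := intervalIntegral.integral_same

lemma continuous_primitive (hg : Monotone g) : Continuous (primitive g) :=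
  intervalIntegral.continuous_primitive (fun _ _ => hg.intervalIntegrable) 0

lemma primitive_add_mul_sub_le (hg : Monotone g) (a b : ℝ) :
    primitive g a + g a * (b - a) ≤ primitive g b := by
  have hint : ∀ x y : ℝ, IntervalIntegrable g volume x y := fun _ _ => hg.intervalIntegrable
  have hdiff : primitive g b - primitive g a = ∫ t in a..b, g t :=
    intervalIntegral.integral_interval_sub_left (hint 0 b) (hint 0 a)
  rcases le_total a b with hab | hba
  · have := intervalIntegral.integral_mono_on hab (intervalIntegrable_const (c := g a)) (hint a b)
      fun t ht => hg ht.1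
    rw [intervalIntegral.integral_const, smul_eq_mul] at this
    linarith
  · have := intervalIntegral.integral_mono_on hba (hint b a) (intervalIntegrable_const (c := g a))
      fun t ht => hg ht.2
    rw [intervalIntegral.integral_const, smul_eq_mul] at this
    rw [intervalIntegral.integral_symm] at hdiff
    linarith

lemma primitive_nonneg (hg : Monotone g) (hg0 : g 0 = 0) (s : ℝ) : 0 ≤ primitive g s := by
  simpa [hg0] using primitive_add_mul_sub_le hg 0 s

lemma primitive_le_mul_sq {Lg : NNReal} (hgLip : LipschitzWith Lg g) (hg : Monotone g)
    (hg0 : g 0 = 0) (s : ℝ) : primitive g s ≤ Lg * s ^ 2 := by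
  have hsupp := primitive_add_mul_sub_le hg s 0
  have hgs : |g s| ≤ Lg * |s| := by simpa [Real.dist_eq, hg0] using hgLip.dist_le_mul s 0
  calc primitive g s ≤ s * g s := by simp only [primitive_zero] at hsupp; linarith
    _ ≤ |s| * |g s| := (le_abs_self _).trans_eq (abs_mul _ _)
    _ ≤ |s| * (Lg * |s|) := by gcongr
    _ = Lg * s ^ 2 := by rw [mul_left_comm, ← sq, sq_abs]

lemma integrable_primitive_comp {α : Type*} [MeasurableSpace α] {μ : Measure α} {Lg : NNReal}
    (hgLip : LipschitzWith Lg g) (hg : Monotone g) (hg0 : g 0 = 0) (u : Lp ℝ 2 μ) :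
    Integrable (fun x => primitive g (u x)) μ :=
  ((Lp.memLp u).integrable_sq.const_mul Lg).mono'
    ((continuous_primitive hg).comp_aestronglyMeasurable (Lp.aestronglyMeasurable u))
    (Filter.Eventually.of_forall fun x => by
      rw [Real.norm_eq_abs, abs_of_nonneg (primitive_nonneg hg hg0 _)]
      exact primitive_le_mul_sq hgLip hg hg0 _)

end Primitive

section SubMarkov

variable {α : Type*} [MeasurableSpace α] {μ : Measure α}

def IsSubMarkov (T : Lp ℝ 1 μ →ₗ[ℝ] Lp ℝ 1 μ) : Prop :=
  ∀ f : Lp ℝ 1 μ, (∀ᵐ x ∂μ, 0 ≤ f x ∧ f x ≤ 1) → ∀ᵐ x ∂μ, 0 ≤ T f x ∧ T f x ≤ 1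

namespace IsSubMarkov

variable {T : Lp ℝ 1 μ →ₗ[ℝ] Lp ℝ 1 μ}

lemma nonneg_of_ae_le (hT : IsSubMarkov T) {f : Lp ℝ 1 μ} {c : ℝ} (hc : 0 < c)
    (hf : ∀ᵐ x ∂μ, 0 ≤ f x ∧ f x ≤ c) : 0 ≤ T f := by
  have hscaled : ∀ᵐ x ∂μ, 0 ≤ (c⁻¹ • f) x ∧ (c⁻¹ • f) x ≤ 1 := by
    filter_upwards [Lp.coeFn_smul c⁻¹ f, hf] with x hx ⟨hfx0, hfxc⟩
    rw [hx, Pi.smul_apply, smul_eq_mul]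
    exact ⟨by positivity, inv_mul_le_one_of_le₀ hfxc hc.le⟩
  rw [← smul_inv_smul₀ hc.ne' f, map_smul, ← Lp.coeFn_nonneg]
  filter_upwards [Lp.coeFn_smul c (T (c⁻¹ • f)), hT _ hscaled] with x hx hTx
  rw [hx]
  exact mul_nonneg hc.le hTx.1

lemma nonneg (hT : IsSubMarkov T) (hcont : Continuous T) {f : Lp ℝ 1 μ} (hf : 0 ≤ f) :
    0 ≤ T f := by
  -- nonnegative simple functions are bounded and dense in the nonnegative cone of `L¹`
  refine isClosed_property (p := fun f : {f : Lp ℝ 1 μ // 0 ≤ f} => 0 ≤ T f)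
    (Lp.simpleFunc.denseRange_coeSimpleFuncNonnegToLpNonneg 1 μ ℝ ENNReal.one_ne_top)
    ((isClosed_Ici (a := 0)).preimage (hcont.comp continuous_subtype_val)) (fun s => ?_) ⟨f, hf⟩
  obtain ⟨s', hs'_nonneg, hss'⟩ := Lp.simpleFunc.exists_simpleFunc_nonneg_ae_eq s.2
  obtain ⟨c, hc⟩ := s'.exists_forall_le
  refine hT.nonneg_of_ae_le (c := max c 1) (by positivity) ?_
  filter_upwards [hss'] with x hx
  exact ⟨hx ▸ hs'_nonneg x, hx ▸ (hc x).trans (le_max_left _ _)⟩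

lemma monotone (hT : IsSubMarkov T) (hcont : Continuous T) : Monotone T := fun f h hfh => by
  rw [← sub_nonneg, ← map_sub]
  exact hT.nonneg hcont (sub_nonneg.2 hfh)

lemma affine_le [IsFiniteMeasure μ] (hT : IsSubMarkov T) (hcont : Continuous T)
    {f F : Lp ℝ 1 μ} {a b : ℝ} (hb : b ≤ 0) (h : ∀ᵐ x ∂μ, a * f x + b ≤ F x) :
    ∀ᵐ x ∂μ, a * T f x + b ≤ T F x := by
  set one : Lp ℝ 1 μ := Lp.const 1 μ (1 : ℝ)
  have hone : ∀ᵐ x ∂μ, one x = 1 := Lp.coeFn_const 1 μ (1 : ℝ)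
  have hle : a • f + b • one ≤ F := by
    rw [← Lp.coeFn_le]
    filter_upwards [Lp.coeFn_add (a • f) (b • one), Lp.coeFn_smul a f, Lp.coeFn_smul b one,
      hone, h] with x hadd hsmul₁ hsmul₂ hx1 hx
    simpa only [hadd, Pi.add_apply, hsmul₁, hsmul₂, Pi.smul_apply, smul_eq_mul, hx1, mul_one]
  have hTle := (Lp.coeFn_le _ _).2 (hT.monotone hcont hle)
  rw [map_add, map_smul, map_smul] at hTle
  filter_upwards [hTle, Lp.coeFn_add (a • T f) (b • T one), Lp.coeFn_smul a (T f),
    Lp.coeFn_smul b (T one), hT one (hone.mono fun x hx => by simp [hx])]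
    with x hx hadd hsmul₁ hsmul₂ hTone
  simp only [hadd, Pi.add_apply, hsmul₁, hsmul₂, Pi.smul_apply, smul_eq_mul] at hx
  nlinarith [hTone.2]

lemma comp_le [IsFiniteMeasure μ] (hT : IsSubMarkov T) (hcont : Continuous T) {φ g : ℝ → ℝ}
    (hφ : Continuous φ) (hg : Continuous g) (hφ0 : φ 0 ≤ 0)
    (hsupp : ∀ a b, φ a + g a * (b - a) ≤ φ b) {f F : Lp ℝ 1 μ}
    (hF : F =ᵐ[μ] fun x => φ (f x)) : ∀ᵐ x ∂μ, φ (T f x) ≤ T F x := by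
  have hrat : ∀ q : ℚ, ∀ᵐ x ∂μ, g q * T f x + (φ q - g q * q) ≤ T F x := fun q =>
    hT.affine_le hcont (by linarith [hsupp q 0])
      (hF.mono fun x hx => by rw [hx]; linarith [hsupp q (f x)])
  -- countably many supporting lines suffice, by continuity of `φ` and `g`
  filter_upwards [ae_all_iff.2 hrat] with x hx
  have hlines : ∀ t : ℝ, φ t + g t * (T f x - t) ≤ T F x := fun t =>
    Rat.denseRange_cast.induction_on t
      (isClosed_le (by fun_prop) continuous_const) fun q => by linarith [hx q]
  simpa using hlines (T f x)

lemma integral_comp_le [IsFiniteMeasure μ] (hT : IsSubMarkov T)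
    (hcontr : ∀ f, ‖T f‖ ≤ ‖f‖) {φ g : ℝ → ℝ} (hφ : Continuous φ) (hg : Continuous g)
    (hφ0 : φ 0 = 0) (hg0 : g 0 = 0) (hsupp : ∀ a b, φ a + g a * (b - a) ≤ φ b)
    {f : Lp ℝ 1 μ} (hφf : Integrable (fun x => φ (f x)) μ) :
    ∫ x, φ (T f x) ∂μ ≤ ∫ x, φ (f x) ∂μ := by
  have hφ_nonneg : ∀ s, 0 ≤ φ s := fun s => by simpa [hφ0, hg0] using hsupp 0 s
  have hcont : Continuous T := AddMonoidHomClass.continuous_of_bound T 1 (by simpa using hcontr)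
  set F := hφf.toL1 _
  have hF : F =ᵐ[μ] fun x => φ (f x) := hφf.coeFn_toL1
  calc ∫ x, φ (T f x) ∂μ ≤ ∫ x, T F x ∂μ :=
        integral_mono_of_nonneg (Filter.Eventually.of_forall fun x => hφ_nonneg _)
          (L1.integrable_coeFn _) (hT.comp_le hcont hφ hg hφ0.le hsupp hF)
    _ ≤ ‖T F‖ := (Real.le_norm_self _).trans
        ((norm_integral_le_integral_norm _).trans_eq (L1.norm_eq_integral_norm _).symm)
    _ ≤ ‖F‖ := hcontr F
    _ = ∫ x, φ (f x) ∂μ := by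
        rw [L1.norm_eq_integral_norm]
        refine integral_congr_ae (hF.mono fun x hx => ?_)
        simp only [hx, Real.norm_eq_abs, abs_eq_self, hφ_nonneg]

theorem inner_sub_compLp_nonneg [IsFiniteMeasure μ]
    (hT : IsSubMarkov T) (hcontr : ∀ f, ‖T f‖ ≤ ‖f‖) {g : ℝ → ℝ} {Lg : NNReal}
    (hgLip : LipschitzWith Lg g) (hg : Monotone g) (hg0 : g 0 = 0) {u v : Lp ℝ 2 μ}
    {f : Lp ℝ 1 μ} (hfu : f =ᵐ[μ] u) (hfv : T f =ᵐ[μ] v) :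
    0 ≤ ⟪u - v, hgLip.compLp hg0 u⟫ := by
  have hGu := integrable_primitive_comp hgLip hg hg0 u
  have hGv := integrable_primitive_comp hgLip hg hg0 v
  have hjensen : ∫ x, primitive g (v x) ∂μ ≤ ∫ x, primitive g (u x) ∂μ :=
    calc ∫ x, primitive g (v x) ∂μ = ∫ x, primitive g (T f x) ∂μ :=
          integral_congr_ae (hfv.fun_comp (primitive g)).symm
      _ ≤ ∫ x, primitive g (f x) ∂μ :=
          hT.integral_comp_le hcontr (continuous_primitive hg) hgLip.continuous primitive_zero
            hg0 (primitive_add_mul_sub_le hg) (hGu.congr (hfu.fun_comp (primitive g)).symm)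
      _ = ∫ x, primitive g (u x) ∂μ := integral_congr_ae (hfu.fun_comp (primitive g))
  have hconvex : ∀ᵐ x ∂μ, primitive g (u x) - primitive g (v x) ≤
      inner ℝ ((u - v : Lp ℝ 2 μ) x) (hgLip.compLp hg0 u x) := by
    filter_upwards [Lp.coeFn_sub u v, hgLip.coeFn_compLp hg0 u] with x hsub hcomp
    rw [hsub, hcomp, Pi.sub_apply, Function.comp_apply, Real.inner_apply]
    linarith [primitive_add_mul_sub_le hg (u x) (v x)]
  rw [L2.inner_def]
  calc (0 : ℝ) ≤ ∫ x, (primitive g (u x) - primitive g (v x)) ∂μ := by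
        rw [integral_sub hGu hGv]; linarith
    _ ≤ _ := integral_mono_ae (hGu.sub hGv) (L2.integrable_inner _ _) hconvex

end IsSubMarkov

end SubMarkov

theorem statement7_general
    {d : ℕ} (D : Set (Fin d → ℝ))
    (hDbdd : Bornology.IsBounded D)
    (μ : Measure (Fin d → ℝ)) (hμ : μ = volume.restrict D)
    {V : Type*} [NormedAddCommGroup V] [InnerProductSpace ℝ V]
    (e : V →L[ℝ] Lp ℝ 2 μ)
    (J : ℝ → Lp ℝ 2 μ → V)
    (S : ℝ → (Lp ℝ 1 μ →ₗ[ℝ] Lp ℝ 1 μ))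
    (hScontr : ∀ lam : ℝ, 0 < lam → ∀ f : Lp ℝ 1 μ, ‖S lam f‖ ≤ ‖f‖)
    (hSsubMarkov : ∀ lam : ℝ, 0 < lam → ∀ f : Lp ℝ 1 μ,
      (∀ᵐ x ∂μ, 0 ≤ f x ∧ f x ≤ 1) →
      (∀ᵐ x ∂μ, 0 ≤ S lam f x ∧ S lam f x ≤ 1))
    (hSext : ∀ lam : ℝ, 0 < lam → ∀ (f2 : Lp ℝ 2 μ) (f1 : Lp ℝ 1 μ),
      (f1 : (Fin d → ℝ) → ℝ) =ᵐ[μ] f2 →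
      (S lam f1 : (Fin d → ℝ) → ℝ) =ᵐ[μ] e (J lam f2))
    (g : ℝ → ℝ) (Lg : NNReal) (hgLip : LipschitzWith Lg g)
    (hgmono : Monotone g) (hg0 : g 0 = 0) :
    ∀ lam : ℝ, 0 < lam → ∀ u : Lp ℝ 2 μ,
      0 ≤ ⟪lam⁻¹ • (u - e (J lam u)), hgLip.compLp hg0 u⟫ := by
  intro lam hlam u
  have : IsFiniteMeasure μ := hμ ▸ isFiniteMeasure_restrict.2 hDbdd.measure_lt_top.ne
  have hu₁ : MemLp u 1 μ := (Lp.memLp u).mono_exponent (by norm_num)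
  rw [real_inner_smul_left]
  exact mul_nonneg (inv_nonneg.2 hlam.le)
    (IsSubMarkov.inner_sub_compLp_nonneg (hSsubMarkov lam hlam) (hScontr lam hlam) hgLip hgmono
      hg0 hu₁.coeFn_toLp (hSext lam hlam u _ hu₁.coeFn_toLp))

/-- Positivity of the Yosida pairing, Lemma 6.2 of the paper.
`D ⊆ ℝ^d` is a bounded domain with Lebesgue measure `μ`, `H := L²(D)`.
`V ⊆ H ⊆ V'` is a Gelfand triple (dense continuous injection `e : V → L²(D)`
of real separable Hilbert spaces), `A : V → V'` is the bounded coercive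
operator encoded by the continuous bilinear form `a v w = ⟨Av, w⟩`,
`J : ℝ → L²(D) → V` encodes the resolvents `J_λ = (I + λ A₂)⁻¹` of the part
`A₂` of `A` in `H`, and the Yosida approximation is `A_λ u = λ⁻¹ (u - J_λ u)`.
For each `λ > 0` the resolvent extends to a linear contraction `S λ` of
`L¹(D)` which is sub-Markovian.

Claim: for every `λ > 0`, every nondecreasing Lipschitz function `g : ℝ → ℝ`
with `g 0 = 0`, and every `u ∈ L²(D)`, one has `⟪A_λ u, g ∘ u⟫_{L²(D)} ≥ 0`. -/
theorem statement7
    {d : ℕ} (D : Set (Fin d → ℝ)) (hDmeas : MeasurableSet D)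
    (hDopen : IsOpen D) (hDbdd : Bornology.IsBounded D) (hDne : D.Nonempty)
    (μ : Measure (Fin d → ℝ)) (hμ : μ = volume.restrict D)
    {V : Type*} [NormedAddCommGroup V] [InnerProductSpace ℝ V]
    [CompleteSpace V] [TopologicalSpace.SeparableSpace V]
    (e : V →L[ℝ] Lp ℝ 2 μ) (he : Function.Injective e) (hdense : DenseRange e)
    (a : V →L[ℝ] V →L[ℝ] ℝ) (C : ℝ) (hC : 0 < C)
    (hcoer : ∀ v : V, C * ‖v‖ ^ 2 ≤ a v v)
    (J : ℝ → Lp ℝ 2 μ → V)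
    (hJ : ∀ lam : ℝ, 0 < lam → ∀ f : Lp ℝ 2 μ, ∃ h : Lp ℝ 2 μ,
      (∀ w : V, a (J lam f) w = ⟪h, e w⟫) ∧ e (J lam f) + lam • h = f)
    (S : ℝ → (Lp ℝ 1 μ →ₗ[ℝ] Lp ℝ 1 μ))
    (hScontr : ∀ lam : ℝ, 0 < lam → ∀ f : Lp ℝ 1 μ, ‖S lam f‖ ≤ ‖f‖)
    (hSsubMarkov : ∀ lam : ℝ, 0 < lam → ∀ f : Lp ℝ 1 μ,
      (∀ᵐ x ∂μ, 0 ≤ f x ∧ f x ≤ 1) →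
      (∀ᵐ x ∂μ, 0 ≤ S lam f x ∧ S lam f x ≤ 1))
    (hSext : ∀ lam : ℝ, 0 < lam → ∀ (f2 : Lp ℝ 2 μ) (f1 : Lp ℝ 1 μ),
      (f1 : (Fin d → ℝ) → ℝ) =ᵐ[μ] f2 →
      (S lam f1 : (Fin d → ℝ) → ℝ) =ᵐ[μ] e (J lam f2))
    (g : ℝ → ℝ) (Lg : NNReal) (hgLip : LipschitzWith Lg g)
    (hgmono : Monotone g) (hg0 : g 0 = 0) :
    ∀ lam : ℝ, 0 < lam → ∀ u : Lp ℝ 2 μ,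
      0 ≤ ⟪lam⁻¹ • (u - e (J lam u)), hgLip.compLp hg0 u⟫ :=
  statement7_general D hDbdd μ hμ e J S hScontr hSsubMarkov hSext g Lg hgLip hgmono hg0
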